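/- arXiv:2007.03420 — 8 statements merged into one kernel-verified Lean document; each statement's English description precedes it below -/
import Mathlib

section
/- Let Ψ ∈ ℝ^{m×n} and b ∈ ℝ^m with b in the column space of Ψ. Then there exists a constant λ₀ > 0 such that for every λ with 0 < λ < λ₀, a vector x* ∈ ℝⁿ is a global minimizer of F(x) := ‖Ψx − b‖₂² + λ‖x‖₀ if and only if Ψx* = b and ‖x*‖₀ ≤ ‖y‖₀ for every y ∈ ℝⁿ with Ψy = b. -/
/-!
For each support set `T`, the vectors `Ψx` with `supp x ⊆ T` form a closed subspace. If `b`
lies in it, some solution of `Ψx = b` is supported in `T`; otherwise `‖Ψx − b‖²` is bounded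
below on it by a positive constant. Taking the least of these finitely many constants gives a
gap `δ > 0`: every `x` either has a solution at most as sparse as itself, or a residual of at
least `δ`. With `k` the least sparsity of a solution and `λ k < δ`, the minimum of `F` is `λ k`,
attained exactly at the sparsest solutions.
-/

open Finset

/-- ℓ₀ "norm": number of nonzero entries. -/
noncomputable def l0norm {n : ℕ} (x : Fin n → ℝ) : ℕ :=
  (Finset.univ.filter (fun i => x i ≠ 0)).card

open Matrix Filter Topology

def supportedOn {ι : Type*} (R : Type*) [Semiring R] (T : Finset ι) : Submodule R (ι → R) where
  carrier := {x | ∀ i ∉ T, x i = 0}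
  add_mem' ha hb i hi := by simp [ha i hi, hb i hi]
  zero_mem' _ _ := rfl
  smul_mem' c x hx i hi := by simp [hx i hi]

lemma l0norm_le_card_of_mem_supportedOn {n : ℕ} {T : Finset (Fin n)} {x : Fin n → ℝ}
    (hx : x ∈ supportedOn ℝ T) : l0norm x ≤ T.card :=
  card_le_card fun i hi => by_contra fun hiT => (mem_filter.1 hi).2 (hx i hiT)

lemma mem_supportedOn_filter_ne_zero {n : ℕ} (x : Fin n → ℝ) :
    x ∈ supportedOn ℝ (univ.filter fun i => x i ≠ 0) := fun i hi => by
  simpa using hi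

lemma exists_pos_le_sum_sq_sub_of_isClosed {ι : Type*} [Fintype ι] {S : Set (ι → ℝ)}
    (hS : IsClosed S) {b : ι → ℝ} (hb : b ∉ S) :
    ∃ δ > 0, ∀ y ∈ S, δ ≤ ∑ i, (y i - b i) ^ 2 := by
  obtain ⟨r, hr, hball⟩ := Metric.isOpen_iff.1 hS.isOpen_compl b hb
  refine ⟨r ^ 2, by positivity, fun y hy => ?_⟩
  by_contra! hlt
  refine hball (Metric.mem_ball.2 ((dist_pi_lt_iff hr).2 fun i => ?_)) hy
  rw [Real.dist_eq]
  refine abs_lt_of_sq_lt_sq (lt_of_le_of_lt ?_ hlt) hr.le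
  exact single_le_sum (f := fun i => (y i - b i) ^ 2) (fun _ _ => sq_nonneg _) (mem_univ i)

section Residual

variable {ι κ : Type*} [Fintype ι] [Fintype κ]

def residualSq (Ψ : Matrix ι κ ℝ) (b : ι → ℝ) (x : κ → ℝ) : ℝ :=
  ∑ i, ((Ψ *ᵥ x) i - b i) ^ 2

lemma residualSq_nonneg (Ψ : Matrix ι κ ℝ) (b : ι → ℝ) (x : κ → ℝ) : 0 ≤ residualSq Ψ b x :=
  sum_nonneg fun _ _ => sq_nonneg _

lemma residualSq_eq_zero_iff {Ψ : Matrix ι κ ℝ} {b : ι → ℝ} {x : κ → ℝ} :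
    residualSq Ψ b x = 0 ↔ Ψ *ᵥ x = b := by
  rw [residualSq, sum_eq_zero_iff_of_nonneg fun _ _ => sq_nonneg _]
  simp [sub_eq_zero, funext_iff]

end Residual

section Gap

variable {ι : Type*} [Fintype ι] {n : ℕ}

lemma exists_pos_residualSq_gap_of_supportedOn (Ψ : Matrix ι (Fin n) ℝ) (b : ι → ℝ)
    (T : Finset (Fin n)) :
    ∃ δ > 0, ∀ x ∈ supportedOn ℝ T,
      (∃ z ∈ supportedOn ℝ T, Ψ *ᵥ z = b) ∨ δ ≤ residualSq Ψ b x := by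
  by_cases hsol : ∃ z ∈ supportedOn ℝ T, Ψ *ᵥ z = b
  · exact ⟨1, one_pos, fun _ _ => Or.inl hsol⟩
  let S := (supportedOn ℝ T).map Ψ.mulVecLin
  have hbS : b ∉ S := fun h => hsol (Submodule.mem_map.1 h)
  obtain ⟨δ, hδ, hS⟩ :=
    exists_pos_le_sum_sq_sub_of_isClosed (Submodule.closed_of_finiteDimensional S) hbS
  exact ⟨δ, hδ, fun x hx => Or.inr (hS _ (Submodule.mem_map_of_mem hx))⟩

lemma exists_pos_residualSq_gap (Ψ : Matrix ι (Fin n) ℝ) (b : ι → ℝ) :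
    ∃ δ > 0, ∀ x, (∃ z, Ψ *ᵥ z = b ∧ l0norm z ≤ l0norm x) ∨ δ ≤ residualSq Ψ b x := by
  have hev : ∀ᶠ δ in 𝓝[>] (0 : ℝ), ∀ T : Finset (Fin n), ∀ x ∈ supportedOn ℝ T,
      (∃ z ∈ supportedOn ℝ T, Ψ *ᵥ z = b) ∨ δ ≤ residualSq Ψ b x := by
    refine eventually_all.2 fun T => ?_
    obtain ⟨δT, hδT, hT⟩ := exists_pos_residualSq_gap_of_supportedOn Ψ b T
    filter_upwards [Ioc_mem_nhdsGT hδT] with δ hδ x hx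
    exact (hT x hx).imp_right hδ.2.trans
  obtain ⟨δ, hgap, hδ⟩ := (hev.and self_mem_nhdsWithin).exists
  refine ⟨δ, hδ, fun x => (hgap _ x (mem_supportedOn_filter_ne_zero x)).imp_left ?_⟩
  rintro ⟨z, hz, hzb⟩
  exact ⟨z, hzb, l0norm_le_card_of_mem_supportedOn hz⟩

end Gap

section Objective

variable {ι : Type*} [Fintype ι] {n : ℕ} {Ψ : Matrix ι (Fin n) ℝ} {b : ι → ℝ} {δ lam : ℝ}
  {k : ℕ}

lemma mul_le_residualSq_add_mul_l0norm
    (hgap : ∀ x, (∃ z, Ψ *ᵥ z = b ∧ l0norm z ≤ l0norm x) ∨ δ ≤ residualSq Ψ b x)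
    (hk : ∀ y, Ψ *ᵥ y = b → k ≤ l0norm y) (hlam : 0 ≤ lam) (hlamk : lam * k < δ)
    (x : Fin n → ℝ) : lam * k ≤ residualSq Ψ b x + lam * l0norm x := by
  have hres := residualSq_nonneg Ψ b x
  rcases hgap x with ⟨z, hzb, hzx⟩ | hδ
  · have : (k : ℝ) ≤ l0norm x := mod_cast (hk z hzb).trans hzx
    nlinarith
  · have : 0 ≤ lam * l0norm x := by positivity
    linarith

lemma residualSq_add_mul_l0norm_le_iff
    (hgap : ∀ x, (∃ z, Ψ *ᵥ z = b ∧ l0norm z ≤ l0norm x) ∨ δ ≤ residualSq Ψ b x)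
    (hk : ∀ y, Ψ *ᵥ y = b → k ≤ l0norm y) (hlam : 0 < lam) (hlamk : lam * k < δ)
    {x : Fin n → ℝ} :
    residualSq Ψ b x + lam * l0norm x ≤ lam * k ↔ Ψ *ᵥ x = b ∧ l0norm x ≤ k := by
  have hres := residualSq_nonneg Ψ b x
  constructor
  · intro hle
    have hxb : Ψ *ᵥ x = b := by
      rcases hgap x with ⟨z, hzb, hzx⟩ | hδ
      · have : (k : ℝ) ≤ l0norm x := mod_cast (hk z hzb).trans hzx
        exact residualSq_eq_zero_iff.1 (by nlinarith)
      · have : 0 ≤ lam * l0norm x := by positivity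
        linarith
    rw [residualSq_eq_zero_iff.2 hxb, zero_add] at hle
    have hxk : (l0norm x : ℝ) ≤ k := le_of_mul_le_mul_left hle hlam
    exact ⟨hxb, mod_cast hxk⟩
  · rintro ⟨hxb, hxk⟩
    rw [residualSq_eq_zero_iff.2 hxb, zero_add]
    gcongr

end Objective

/-- For b in the column space of Ψ, there is λ₀ > 0 such that for all
0 < λ < λ₀, x* globally minimizes F(x) = ‖Ψx − b‖₂² + λ‖x‖₀ iff Ψx* = b and x* has
minimal ℓ₀ norm among solutions of Ψx = b. -/
theorem stmt0 {m n : ℕ} (Ψ : Matrix (Fin m) (Fin n) ℝ) (b : Fin m → ℝ)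
    (hb : ∃ x : Fin n → ℝ, Ψ.mulVec x = b) :
    ∃ lam₀ : ℝ, 0 < lam₀ ∧ ∀ lam : ℝ, 0 < lam → lam < lam₀ →
      ∀ xs : Fin n → ℝ,
        (∀ x : Fin n → ℝ,
            (∑ i, (Ψ.mulVec xs i - b i) ^ 2) + lam * (l0norm xs : ℝ) ≤
              (∑ i, (Ψ.mulVec x i - b i) ^ 2) + lam * (l0norm x : ℝ)) ↔
          (Ψ.mulVec xs = b ∧
            ∀ y : Fin n → ℝ, Ψ.mulVec y = b → l0norm xs ≤ l0norm y) := by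
  obtain ⟨δ, hδ, hgap⟩ := exists_pos_residualSq_gap Ψ b
  obtain ⟨x₀, hx₀, hx₀_min⟩ : ∃ x₀, Ψ *ᵥ x₀ = b ∧ ∀ y, Ψ *ᵥ y = b → l0norm x₀ ≤ l0norm y := by
    obtain ⟨x₀, hx₀, hk⟩ := Nat.sInf_mem (Set.Nonempty.image l0norm (s := {x | Ψ *ᵥ x = b}) hb)
    exact ⟨x₀, hx₀, fun y hy => hk ▸ Nat.sInf_le ⟨y, hy, rfl⟩⟩
  refine ⟨δ / (l0norm x₀ + 1), by positivity, fun lam hlam hlt xs => ?_⟩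
  have hlamk : lam * l0norm x₀ < δ := by
    rw [lt_div_iff₀ (by positivity)] at hlt
    linarith
  calc (∀ x, residualSq Ψ b xs + lam * l0norm xs ≤ residualSq Ψ b x + lam * l0norm x)
      ↔ residualSq Ψ b xs + lam * l0norm xs ≤ lam * l0norm x₀ := by
        refine ⟨fun h => (h x₀).trans_eq ?_, fun h x => h.trans
          (mul_le_residualSq_add_mul_l0norm hgap hx₀_min hlam.le hlamk x)⟩
        rw [residualSq_eq_zero_iff.2 hx₀, zero_add]
    _ ↔ Ψ *ᵥ xs = b ∧ l0norm xs ≤ l0norm x₀ :=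
        residualSq_add_mul_l0norm_le_iff hgap hx₀_min hlam hlamk
    _ ↔ Ψ *ᵥ xs = b ∧ ∀ y, Ψ *ᵥ y = b → l0norm xs ≤ l0norm y :=
        and_congr_right fun _ => ⟨fun h y hy => h.trans (hx₀_min y hy), fun h => h x₀ hx₀⟩
end

section
/- Let Ψ ∈ ℝ^{m×n}, b ∈ ℝ^m and δ > 0. If x* minimizes ‖x‖_{g_δ} over {x ∈ ℝⁿ : Ψx = b}, then the columns of Ψ indexed by supp(x*) are linearly independent. -/
/-!
If a nonzero vector `v` in the kernel of `Ψ` were supported in `supp x*`, then `x* ± t v` would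
be feasible for all `t`, and for small `t > 0` no coordinate of `x* ± t v` changes sign. On each
coordinate with `vᵢ ≠ 0`, `|x*ᵢ ± t vᵢ|` are then two distinct points of `[0, ∞)` with midpoint
`|x*ᵢ|`, so strict concavity of `s ↦ arctan (s / δ)` makes the mean of the two penalties strictly
smaller than the penalty of `x*`, contradicting minimality.
-/

open Finset Filter Topology
open scoped Matrix

lemma Matrix.mulVec_eq_sum_smul_col {m n R : Type*} [Fintype n] [CommSemiring R]
    (M : Matrix m n R) (v : n → R) : M *ᵥ v = ∑ j, v j • M.col j := by
  ext i
  simp [Matrix.mulVec, dotProduct, Finset.sum_apply, mul_comm]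

lemma Matrix.linearIndepOn_col_of_mulVec_eq_zero {m n R : Type*} [Fintype n] [CommRing R]
    {M : Matrix m n R} {s : Set n} (h : ∀ v, M *ᵥ v = 0 → (∀ j ∉ s, v j = 0) → v = 0) :
    LinearIndepOn R M.col s := by
  classical
  refine linearIndepOn_iff''.2 fun t g hts hgt hsum i _ => ?_
  have hMg : M *ᵥ g = 0 := by
    rw [M.mulVec_eq_sum_smul_col, ← hsum]
    exact (Finset.sum_subset (Finset.subset_univ t) fun j _ hj => by simp [hgt j hj]).symm
  exact congrFun (h g hMg fun j hj => hgt j fun hjt => hj (hts hjt)) i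

lemma Real.strictConcaveOn_arctan_Ici : StrictConcaveOn ℝ (Set.Ici 0) arctan := by
  refine StrictAntiOn.strictConcaveOn_of_deriv (convex_Ici 0) continuous_arctan.continuousOn ?_
  rw [deriv_arctan, interior_Ici]
  intro x hx y _ hxy
  exact one_div_lt_one_div_of_lt (by positivity) (by gcongr; exact le_of_lt hx)

lemma Real.strictConcaveOn_arctan_div {δ : ℝ} (hδ : 0 < δ) :
    StrictConcaveOn ℝ (Set.Ici 0) fun s => arctan (s / δ) := by
  refine ⟨convex_Ici 0, fun x hx y hy hxy a b ha hb hab => ?_⟩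
  have hxy' : x / δ ≠ y / δ := fun h => hxy ((div_left_inj' hδ.ne').1 h)
  have := strictConcaveOn_arctan_Ici.2 (Set.mem_Ici.2 (div_nonneg hx hδ.le))
    (Set.mem_Ici.2 (div_nonneg hy hδ.le)) hxy' ha hb hab
  simpa only [smul_eq_mul, add_div, mul_div_assoc] using this

lemma abs_add_add_abs_sub_of_abs_le {a c : ℝ} (h : |c| ≤ |a|) : |a + c| + |a - c| = 2 * |a| := by
  obtain ⟨h₁, h₂⟩ := abs_le.1 h
  rcases le_total 0 a with ha | ha
  · rw [abs_of_nonneg ha] at h₁ h₂ ⊢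
    rw [abs_of_nonneg (by linarith), abs_of_nonneg (by linarith)]
    ring
  · rw [abs_of_nonpos ha] at h₁ h₂ ⊢
    rw [abs_of_nonpos (by linarith), abs_of_nonpos (by linarith)]
    ring

lemma abs_add_ne_abs_sub {a c : ℝ} (ha : a ≠ 0) (hc : c ≠ 0) : |a + c| ≠ |a - c| := by
  intro h
  rcases abs_eq_abs.1 h with h | h
  · exact hc (by linarith)
  · exact ha (by linarith)

lemma StrictConcaveOn.map_abs_add_add_map_abs_sub_lt {f : ℝ → ℝ}
    (hf : StrictConcaveOn ℝ (Set.Ici 0) f) {a c : ℝ} (hc : c ≠ 0) (h : |c| < |a|) :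
    f |a + c| + f |a - c| < 2 * f |a| := by
  have ha : a ≠ 0 := abs_pos.1 ((abs_nonneg c).trans_lt h)
  have := hf.2 (abs_nonneg (a + c)) (abs_nonneg (a - c)) (abs_add_ne_abs_sub ha hc)
    one_half_pos one_half_pos (add_halves 1)
  have hmid : (1 / 2 : ℝ) • |a + c| + (1 / 2 : ℝ) • |a - c| = |a| := by
    rw [smul_eq_mul, smul_eq_mul, ← mul_add, abs_add_add_abs_sub_of_abs_le h.le]
    ring
  rw [hmid, smul_eq_mul, smul_eq_mul] at this
  linarith

lemma StrictConcaveOn.sum_map_abs_add_add_sum_map_abs_sub_lt {ι : Type*} [Fintype ι]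
    {f : ℝ → ℝ} (hf : StrictConcaveOn ℝ (Set.Ici 0) f) {x v : ι → ℝ} (hv : v ≠ 0)
    (hvx : ∀ i, v i ≠ 0 → |v i| < |x i|) :
    ∑ i, f |x i + v i| + ∑ i, f |x i - v i| < 2 * ∑ i, f |x i| := by
  rw [← sum_add_distrib, mul_sum]
  obtain ⟨k, hk⟩ := Function.ne_iff.1 hv
  refine sum_lt_sum (fun i _ => ?_) ⟨k, mem_univ k, hf.map_abs_add_add_map_abs_sub_lt hk (hvx k hk)⟩
  by_cases hi : v i = 0
  · simp only [hi, add_zero, sub_zero]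
    linarith
  · exact (hf.map_abs_add_add_map_abs_sub_lt hi (hvx i hi)).le

lemma exists_pos_forall_abs_mul_lt {ι : Type*} [Finite ι] (x v : ι → ℝ) :
    ∃ t > 0, ∀ i, x i ≠ 0 → |t * v i| < |x i| := by
  have hsmall : ∀ i, ∀ᶠ t in 𝓝 (0 : ℝ), x i ≠ 0 → |t * v i| < |x i| := by
    intro i
    by_cases hx : x i = 0
    · simp [hx]
    have hlim : Tendsto (fun t : ℝ => |t * v i|) (𝓝 0) (𝓝 0) := by
      simpa using ((continuous_id.mul continuous_const).abs.tendsto (0 : ℝ))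
    exact (hlim.eventually (gt_mem_nhds (abs_pos.2 hx))).mono fun _ h _ => h
  obtain ⟨t, ht, ht0⟩ :=
    ((eventually_all.2 hsmall).filter_mono nhdsWithin_le_nhds |>.and
      (self_mem_nhdsWithin : ∀ᶠ t in 𝓝[>] (0 : ℝ), 0 < t)).exists
  exact ⟨t, ht0, ht⟩

/-- If x* minimizes the atan-sum penalty ‖x‖_{g_δ} = ∑ arctan(|xᵢ|/δ)
over {x : Ψx = b}, then the columns of Ψ indexed by supp(x*) are linearly independent. -/
theorem stmt1 {m n : ℕ} (Ψ : Matrix (Fin m) (Fin n) ℝ) (b : Fin m → ℝ) (δ : ℝ) (hδ : 0 < δ)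
    (xs : Fin n → ℝ) (hfeas : Ψ.mulVec xs = b)
    (hmin : ∀ y : Fin n → ℝ, Ψ.mulVec y = b →
      ∑ i, Real.arctan (|xs i| / δ) ≤ ∑ i, Real.arctan (|y i| / δ)) :
    LinearIndependent ℝ (fun j : {j : Fin n // xs j ≠ 0} => (fun i => Ψ i j.1 : Fin m → ℝ)) := by
  refine Matrix.linearIndepOn_col_of_mulVec_eq_zero (s := {j | xs j ≠ 0}) fun v hΨv hsupp => ?_
  by_contra hv
  obtain ⟨t, ht, hsmall⟩ := exists_pos_forall_abs_mul_lt xs v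
  have hlt := (Real.strictConcaveOn_arctan_div hδ).sum_map_abs_add_add_sum_map_abs_sub_lt
    (x := xs) (v := t • v) (smul_ne_zero ht.ne' hv) fun i hi =>
      hsmall i fun hx => hi (by simp [hsupp i (by simpa using hx)])
  have hadd := hmin (xs + t • v) (by simp [Matrix.mulVec_add, Matrix.mulVec_smul, hΨv, hfeas])
  have hsub := hmin (xs - t • v) (by simp [Matrix.mulVec_sub, Matrix.mulVec_smul, hΨv, hfeas])
  simp only [Pi.add_apply, Pi.sub_apply, Pi.smul_apply, smul_eq_mul] at hlt hadd hsub
  linarith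
end

section
/- Let x, y ∈ ℝⁿ with ‖x‖₀ < ‖y‖₀. Then there exists δ₀ > 0 such that for all δ with 0 < δ < δ₀, ∑_{i=1}^n arctan(|x_i|/δ) < ∑_{i=1}^n arctan(|y_i|/δ). -/
open Finset Filter Topology Real

lemma tendsto_arctan_abs_div_nhdsGT_zero (a : ℝ) :
    Tendsto (fun δ : ℝ => arctan (|a| / δ)) (𝓝[>] 0) (𝓝 (if a ≠ 0 then π / 2 else 0)) := by
  by_cases ha : a = 0
  · simp [ha]
  · rw [if_pos ha]
    have h_div : Tendsto (fun δ : ℝ => |a| / δ) (𝓝[>] 0) atTop := by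
      simpa only [div_eq_mul_inv] using
        tendsto_inv_nhdsGT_zero.const_mul_atTop (abs_pos.mpr ha)
    exact (tendsto_arctan_atTop.mono_right nhdsWithin_le_nhds).comp h_div

lemma tendsto_sum_arctan_abs_div_nhdsGT_zero {ι : Type*} [Fintype ι] (z : ι → ℝ) :
    Tendsto (fun δ : ℝ => ∑ i, arctan (|z i| / δ)) (𝓝[>] 0)
      (𝓝 ((univ.filter (fun i => z i ≠ 0)).card * (π / 2))) := by
  have h_lim : ∑ i, (if z i ≠ 0 then π / 2 else 0) =
      ((univ.filter (fun i => z i ≠ 0)).card : ℝ) * (π / 2) := by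
    rw [sum_ite, sum_const_zero, add_zero, sum_const, nsmul_eq_mul]
  rw [← h_lim]
  exact tendsto_finsetSum _ fun i _ => tendsto_arctan_abs_div_nhdsGT_zero (z i)

/-- If ‖x‖₀ < ‖y‖₀ then for all sufficiently small δ > 0 the atan-sum
penalty of x is strictly smaller than that of y. -/
theorem stmt4 {n : ℕ} (x y : Fin n → ℝ)
    (h : (Finset.univ.filter (fun i => x i ≠ 0)).card <
          (Finset.univ.filter (fun i => y i ≠ 0)).card) :
    ∃ δ₀ : ℝ, 0 < δ₀ ∧ ∀ δ : ℝ, 0 < δ → δ < δ₀ →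
      ∑ i, Real.arctan (|x i| / δ) < ∑ i, Real.arctan (|y i| / δ) := by
  have h_lim_lt : ((univ.filter (fun i => x i ≠ 0)).card : ℝ) * (π / 2) <
      (univ.filter (fun i => y i ≠ 0)).card * (π / 2) := by gcongr
  have h_ev := (tendsto_sum_arctan_abs_div_nhdsGT_zero x).eventually_lt
    (tendsto_sum_arctan_abs_div_nhdsGT_zero y) h_lim_lt
  obtain ⟨δ₀, hδ₀, h_Ioo⟩ := mem_nhdsGT_iff_exists_Ioo_subset.mp h_ev
  exact ⟨δ₀, hδ₀, fun δ hδ hδδ₀ => h_Ioo ⟨hδ, hδδ₀⟩⟩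
end

section
/- Let Ψ ∈ ℝ^{m×n} and b ∈ ℝ^m with b in the column space of Ψ. Then there exists a constant δ* > 0 (depending on Ψ and b) such that for every δ with 0 < δ < δ*, every minimizer of ‖x‖_{g_δ} over {x ∈ ℝⁿ : Ψx = b} also minimizes ‖x‖₀ over {x ∈ ℝⁿ : Ψx = b}. -/
open Finset

/-!
The penalty `t ↦ arctan (t / δ)` is strictly concave on `[0, ∞)`. Hence if a solution `y ≠ xs`
had its support inside that of a minimizer `xs`, the two points `xs ± t (y - xs)`, for small
`t ≠ 0`, would keep the signs of `xs` and their penalties would average to less than that of `xs`.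
So every minimizer is a basic solution, determined by its support; there are finitely many of
those, and their nonzero entries are at least some `c > 0`. If `k` is the least number of nonzero
entries of a solution, a minimizer with more than `k` of them has penalty at least
`(k + 1) arctan (c / δ)`, which exceeds the bound `k π / 2` on the penalty of a sparsest solution
once `δ` is small.
-/

open Set Filter Topology Real Matrix

theorem Real.strictConcaveOn_arctan : StrictConcaveOn ℝ (Ici 0) arctan := by
  refine StrictAntiOn.strictConcaveOn_of_deriv (convex_Ici 0) continuous_arctan.continuousOn ?_
  rw [interior_Ici, deriv_arctan]
  intro x hx y _ hxy
  have : 0 ≤ x := le_of_lt hx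
  dsimp only
  gcongr

theorem StrictConcaveOn.comp_div {g : ℝ → ℝ} (hg : StrictConcaveOn ℝ (Ici 0) g) {δ : ℝ}
    (hδ : 0 < δ) : StrictConcaveOn ℝ (Ici 0) fun t => g (t / δ) := by
  refine ⟨convex_Ici 0, fun x hx y hy hxy a b ha hb hab => ?_⟩
  have := hg.2 (div_nonneg hx hδ.le) (div_nonneg hy hδ.le)
    ((div_left_inj' hδ.ne').not.2 hxy) ha hb hab
  simpa only [smul_eq_mul, add_div, mul_div_assoc] using this

theorem StrictConcaveOn.map_abs_add_add_map_abs_sub_lt_s6 {g : ℝ → ℝ}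
    (hg : StrictConcaveOn ℝ (Ici 0) g) {p q : ℝ} (hq : q ≠ 0) (hqp : |q| < |p|) :
    g |p + q| + g |p - q| < 2 * g |p| := by
  -- `p + q` and `p - q` have the sign of `p`, so `|p|` is the midpoint of `|p + q| ≠ |p - q|`.
  obtain ⟨hmid, hne⟩ : |p + q| + |p - q| = 2 * |p| ∧ |p + q| ≠ |p - q| := by
    obtain ⟨h₁, h₂⟩ := abs_lt.1 hqp
    rcases le_or_gt 0 p with hp | hp
    · rw [abs_of_nonneg hp] at h₁ h₂ ⊢
      rw [abs_of_pos (by linarith), abs_of_pos (by linarith)]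
      exact ⟨by ring, fun h => hq (by linarith)⟩
    · rw [abs_of_neg hp] at h₁ h₂ ⊢
      rw [abs_of_neg (by linarith), abs_of_neg (by linarith)]
      exact ⟨by ring, fun h => hq (by linarith)⟩
  have := hg.2 (abs_nonneg (p + q)) (abs_nonneg (p - q)) hne one_half_pos one_half_pos
    (add_halves 1)
  have hhalf : (1 / 2 : ℝ) • |p + q| + (1 / 2 : ℝ) • |p - q| = |p| := by
    simp only [smul_eq_mul]; linarith
  rw [hhalf, smul_eq_mul, smul_eq_mul] at this
  linarith

theorem StrictConcaveOn.exists_sum_map_abs_add_add_sum_map_abs_sub_lt {ι : Type*} [Fintype ι]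
    {g : ℝ → ℝ} (hg : StrictConcaveOn ℝ (Ici 0) g) {x d : ι → ℝ} (hd : d ≠ 0)
    (hsupp : ∀ i, x i = 0 → d i = 0) :
    ∃ t : ℝ, ∑ i, g |(x + t • d) i| + ∑ i, g |(x - t • d) i| < 2 * ∑ i, g |x i| := by
  have hsmall : ∀ᶠ t in 𝓝[≠] (0 : ℝ), t ≠ 0 ∧ ∀ i, d i ≠ 0 → |t * d i| < |x i| := by
    refine eventually_mem_nhdsWithin.and (Filter.eventually_all.2 fun i => ?_)
    by_cases hdi : d i = 0
    · exact .of_forall fun _ h => absurd hdi h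
    have hcont : Tendsto (fun t : ℝ => |t * d i|) (𝓝[≠] 0) (𝓝 0) := by
      simpa using ((continuous_id.mul continuous_const).abs.tendsto (0 : ℝ)).mono_left
        (nhdsWithin_le_nhds (s := {0}ᶜ))
    exact (hcont.eventually_lt_const (abs_pos.2 (mt (hsupp i) hdi))).mono fun _ h _ => h
  obtain ⟨t, ht, hlt⟩ := hsmall.exists
  refine ⟨t, ?_⟩
  simp only [Pi.add_apply, Pi.sub_apply, Pi.smul_apply, smul_eq_mul]
  rw [← Finset.sum_add_distrib, Finset.mul_sum]
  obtain ⟨i₀, hi₀⟩ := Function.ne_iff.1 hd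
  refine Finset.sum_lt_sum (fun i _ => ?_) ⟨i₀, Finset.mem_univ _, ?_⟩
  · by_cases hdi : d i = 0
    · simp [hdi, two_mul]
    · exact (hg.map_abs_add_add_map_abs_sub_lt_s6 (mul_ne_zero ht hdi) (hlt i hdi)).le
  · exact hg.map_abs_add_add_map_abs_sub_lt_s6 (mul_ne_zero ht hi₀) (hlt i₀ hi₀)

section BasicSolution

variable {m n : Type*} [Fintype n] (Ψ : Matrix m n ℝ) (b : m → ℝ)

/-- Equivalently, the columns of `Ψ` indexed by the support of `x` are linearly independent. -/
def IsBasicSolution (x : n → ℝ) : Prop :=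
  Ψ *ᵥ x = b ∧ ∀ y, Ψ *ᵥ y = b → (∀ i, x i = 0 → y i = 0) → y = x

variable {Ψ b}

theorem IsBasicSolution.of_forall_sum_le {g : ℝ → ℝ} (hg : StrictConcaveOn ℝ (Ici 0) g)
    {x : n → ℝ} (hx : Ψ *ᵥ x = b)
    (hmin : ∀ y, Ψ *ᵥ y = b → ∑ i, g |x i| ≤ ∑ i, g |y i|) : IsBasicSolution Ψ b x := by
  refine ⟨hx, fun y hy hsupp => ?_⟩
  by_contra hne
  have hfeas : ∀ t : ℝ, Ψ *ᵥ (x + t • (y - x)) = b := fun t => by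
    rw [Matrix.mulVec_add, Matrix.mulVec_smul, Matrix.mulVec_sub, hy, hx, sub_self, smul_zero,
      add_zero]
  obtain ⟨t, ht⟩ := hg.exists_sum_map_abs_add_add_sum_map_abs_sub_lt (x := x) (sub_ne_zero.2 hne)
    (fun i hi => by simp [hi, hsupp i hi])
  have h₁ := hmin _ (hfeas t)
  have h₂ := hmin _ (hfeas (-t))
  rw [neg_smul, ← sub_eq_add_neg] at h₂
  linarith

variable (Ψ b)

theorem setOf_isBasicSolution_finite [Finite n] : {x | IsBasicSolution Ψ b x}.Finite :=
  Set.Finite.of_finite_image (f := Function.support) (Set.toFinite _) fun x hx _ hy hxy =>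
    (hy.2 x hx.1 fun _ hi => Function.notMem_support.1 (hxy ▸ Function.notMem_support.2 hi))

theorem exists_pos_le_abs_of_isBasicSolution :
    ∃ c > 0, ∀ x, IsBasicSolution Ψ b x → ∀ i, x i ≠ 0 → c ≤ |x i| := by
  set T := {p : (n → ℝ) × n | IsBasicSolution Ψ b p.1 ∧ p.1 p.2 ≠ 0}
  have hT : T.Finite :=
    ((setOf_isBasicSolution_finite Ψ b).prod Set.finite_univ).subset fun p hp => ⟨hp.1, trivial⟩
  rcases T.eq_empty_or_nonempty with hempty | hne
  · exact ⟨1, one_pos, fun x hx i hi => (hempty.subset (show (x, i) ∈ T from ⟨hx, hi⟩)).elim⟩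
  obtain ⟨p, hp, hmin⟩ := Set.exists_min_image T (fun p => |p.1 p.2|) hT hne
  exact ⟨|p.1 p.2|, abs_pos.2 hp.2, fun x hx i hi => hmin (x, i) ⟨hx, hi⟩⟩

end BasicSolution

section Arctan

variable {n : ℕ} (x : Fin n → ℝ) (δ : ℝ)

theorem sum_arctan_abs_div_eq_sum_filter :
    ∑ i, arctan (|x i| / δ) = ∑ i with x i ≠ 0, arctan (|x i| / δ) :=
  (Finset.sum_filter_of_ne (p := fun i => x i ≠ 0) fun i _ h hi => h (by simp [hi])).symm

theorem sum_arctan_abs_div_le : ∑ i, arctan (|x i| / δ) ≤ l0norm x * (π / 2) := by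
  rw [sum_arctan_abs_div_eq_sum_filter, l0norm, ← nsmul_eq_mul]
  exact Finset.sum_le_card_nsmul _ _ _ fun i _ => (arctan_lt_pi_div_two _).le

theorem l0norm_mul_arctan_le_sum {c : ℝ} (hδ : 0 ≤ δ) (hc : ∀ i, x i ≠ 0 → c ≤ |x i|) :
    l0norm x * arctan (c / δ) ≤ ∑ i, arctan (|x i| / δ) := by
  rw [sum_arctan_abs_div_eq_sum_filter, l0norm, ← nsmul_eq_mul]
  refine Finset.card_nsmul_le_sum _ _ _ fun i hi => arctan_strictMono.monotone ?_
  gcongr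
  exact hc i (Finset.mem_filter.1 hi).2

end Arctan

theorem eventually_mul_pi_div_two_lt_mul_arctan (k : ℕ) {c : ℝ} (hc : 0 < c) :
    ∀ᶠ δ in 𝓝[>] 0, k * (π / 2) < (k + 1) * arctan (c / δ) := by
  have hlim : Tendsto (fun δ => (k + 1) * arctan (c / δ)) (𝓝[>] 0) (𝓝 ((k + 1) * (π / 2))) := by
    refine (tendsto_nhds_of_tendsto_nhdsWithin tendsto_arctan_atTop).comp ?_ |>.const_mul _
    exact (tendsto_inv_nhdsGT_zero.const_mul_atTop hc).congr fun δ => (div_eq_mul_inv c δ).symm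
  exact hlim.eventually_const_lt (by nlinarith [pi_pos])

/-- For b in the column space of Ψ, there is δ* > 0 such that for all
0 < δ < δ*, every minimizer of the atan-sum penalty ‖x‖_{g_δ} over {x : Ψx = b} also
minimizes ‖x‖₀ over {x : Ψx = b}. -/
theorem stmt6 {m n : ℕ} (Ψ : Matrix (Fin m) (Fin n) ℝ) (b : Fin m → ℝ)
    (hb : ∃ x : Fin n → ℝ, Ψ.mulVec x = b) :
    ∃ δs : ℝ, 0 < δs ∧ ∀ δ : ℝ, 0 < δ → δ < δs →
      ∀ xs : Fin n → ℝ, Ψ.mulVec xs = b →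
        (∀ y : Fin n → ℝ, Ψ.mulVec y = b →
          ∑ i, Real.arctan (|xs i| / δ) ≤ ∑ i, Real.arctan (|y i| / δ)) →
        ∀ y : Fin n → ℝ, Ψ.mulVec y = b → l0norm xs ≤ l0norm y := by
  obtain ⟨x₀, hx₀, hx₀min⟩ : ∃ x₀, Ψ *ᵥ x₀ = b ∧ ∀ y, Ψ *ᵥ y = b → l0norm x₀ ≤ l0norm y :=
    ⟨_, Function.argminOn_mem l0norm _ hb,
      fun _ hy => Function.argminOn_le l0norm {x | Ψ *ᵥ x = b} hy⟩
  obtain ⟨c, hc, hcle⟩ := exists_pos_le_abs_of_isBasicSolution Ψ b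
  obtain ⟨δs, hδs, hsub⟩ :=
    mem_nhdsGT_iff_exists_Ioo_subset.1 (eventually_mul_pi_div_two_lt_mul_arctan (l0norm x₀) hc)
  refine ⟨δs, hδs, fun δ hδ hδδs xs hxs hmin y hy =>
    (le_of_not_gt fun hlt => ?_).trans (hx₀min y hy)⟩
  have hbasic := IsBasicSolution.of_forall_sum_le (strictConcaveOn_arctan.comp_div hδ) hxs hmin
  have hk : (l0norm x₀ + 1 : ℝ) ≤ l0norm xs := by exact_mod_cast hlt
  have hlarge : l0norm x₀ * (π / 2) < (l0norm x₀ + 1) * arctan (c / δ) := hsub ⟨hδ, hδδs⟩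
  refine (hlarge.trans_le ?_).false
  calc
    (l0norm x₀ + 1) * arctan (c / δ) ≤ l0norm xs * arctan (c / δ) :=
      mul_le_mul_of_nonneg_right hk (arctan_nonneg.2 (div_nonneg hc.le hδ.le))
    _ ≤ ∑ i, arctan (|xs i| / δ) := l0norm_mul_arctan_le_sum xs δ hδ.le (hcle xs hbasic)
    _ ≤ ∑ i, arctan (|x₀ i| / δ) := hmin x₀ hx₀
    _ ≤ l0norm x₀ * (π / 2) := sum_arctan_abs_div_le x₀ δ
end

section
/- Let Ψ ∈ ℝ^{m×n}, b ∈ ℝ^m, λ > 0, δ > 0, and let x* be a global minimizer of G_δ(x) := ‖Ψx − b‖₂² + λ‖x‖_{g_δ} over ℝⁿ. Then for every h ∈ ℝⁿ with supp(h) ⊆ supp(x*), one has 2⟨b − Ψx*, Ψh⟩ = λ ∑_{i ∈ supp(x*)} δ·h_i·sgn(x*_i)/(δ² + (x*_i)²); in particular, for every index i with x*_i ≠ 0, 2(Ψᵀ(b − Ψx*))_i = λ·δ·sgn(x*_i)/(δ² + (x*_i)²). -/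
open Finset Real

/-
At a global minimizer, the objective restricted to the line t ↦ x* + t h has a minimum at t = 0.
When supp h ⊆ supp x*, every coordinate that moves along the line stays away from 0, where
|·| is differentiable, so this restriction is differentiable at 0 and its derivative
2⟨Ψx* − b, Ψh⟩ + λ ∑ δ hᵢ sgn(x*ᵢ)/(δ² + x*ᵢ²) vanishes. Taking h = eᵢ gives the coordinatewise form.
-/

theorem SignType.sign_coe_eq_real_sign (x : ℝ) : (SignType.sign x : ℝ) = Real.sign x := by
  rcases lt_trichotomy x 0 with hx | rfl | hx
  · simp [sign_neg hx, Real.sign_of_neg hx]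
  · simp [Real.sign_zero]
  · simp [sign_pos hx, Real.sign_of_pos hx]

/-- For `δ = 0` both sides degenerate: `y / 0 = 0` makes the function constant and the
formula gives `0 / y ^ 2 = 0`. -/
theorem hasDerivAt_arctan_div_const (δ y : ℝ) :
    HasDerivAt (fun y => arctan (y / δ)) (δ / (δ ^ 2 + y ^ 2)) y := by
  rcases eq_or_ne δ 0 with rfl | hδ
  · simpa using hasDerivAt_const y (0 : ℝ)
  · refine ((hasDerivAt_id' y).div_const δ).arctan.congr_deriv ?_
    field_simp

theorem hasDerivAt_arctan_abs_div_const (δ : ℝ) {y : ℝ} (hy : y ≠ 0) :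
    HasDerivAt (fun y => arctan (|y| / δ)) (δ * Real.sign y / (δ ^ 2 + y ^ 2)) y := by
  have h := (hasDerivAt_arctan_div_const δ |y|).comp y (hasDerivAt_abs hy)
  rw [SignType.sign_coe_eq_real_sign, sq_abs] at h
  exact h.congr_deriv (by ring)

theorem hasDerivAt_arctan_abs_div_const_line (δ : ℝ) {x h : ℝ} (hxh : h ≠ 0 → x ≠ 0) :
    HasDerivAt (fun t => arctan (|x + t * h| / δ)) (δ * h * Real.sign x / (δ ^ 2 + x ^ 2)) 0 := by
  rcases eq_or_ne h 0 with rfl | hh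
  · simpa using hasDerivAt_const (0 : ℝ) (arctan (|x| / δ))
  · have hline : HasDerivAt (fun t : ℝ => x + t * h) h 0 := by
      simpa using ((hasDerivAt_id (0 : ℝ)).mul_const h).const_add x
    have hcomp := (hasDerivAt_arctan_abs_div_const δ (y := x + 0 * h) (by simpa using hxh hh)).comp
      (0 : ℝ) hline
    simp only [zero_mul, add_zero] at hcomp
    exact hcomp.congr_deriv (by ring)

theorem hasDerivAt_sum_sq_mulVec_sub_line {m n : ℕ} (Ψ : Matrix (Fin m) (Fin n) ℝ)
    (b : Fin m → ℝ) (x h : Fin n → ℝ) :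
    HasDerivAt (fun t : ℝ => ∑ i, (Ψ.mulVec (x + t • h) i - b i) ^ 2)
      (2 * ∑ i, (Ψ.mulVec x i - b i) * Ψ.mulVec h i) 0 := by
  simp only [Matrix.mulVec_add, Matrix.mulVec_smul, Pi.add_apply, Pi.smul_apply, smul_eq_mul,
    mul_sum]
  refine HasDerivAt.fun_sum fun i _ => ?_
  have hres : HasDerivAt (fun t : ℝ => Ψ.mulVec x i + t * Ψ.mulVec h i - b i) (Ψ.mulVec h i) 0 := by
    simpa using (((hasDerivAt_id (0 : ℝ)).mul_const (Ψ.mulVec h i)).const_add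
      (Ψ.mulVec x i)).sub_const (b i)
  refine (hres.fun_pow 2).congr_deriv ?_
  simp only [zero_mul, add_zero]
  ring

section Objective

variable {m n : ℕ} (Ψ : Matrix (Fin m) (Fin n) ℝ) (b : Fin m → ℝ) (lam δ : ℝ)

noncomputable def atanObjective (x : Fin n → ℝ) : ℝ :=
  (∑ i, (Ψ.mulVec x i - b i) ^ 2) + lam * ∑ i, arctan (|x i| / δ)

theorem hasDerivAt_atanObjective_line {x h : Fin n → ℝ} (hsupp : ∀ i, h i ≠ 0 → x i ≠ 0) :
    HasDerivAt (fun t : ℝ => atanObjective Ψ b lam δ (x + t • h))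
      (2 * ∑ i, (Ψ.mulVec x i - b i) * Ψ.mulVec h i +
        lam * ∑ i, δ * h i * Real.sign (x i) / (δ ^ 2 + x i ^ 2)) 0 := by
  refine (hasDerivAt_sum_sq_mulVec_sub_line Ψ b x h).add (HasDerivAt.const_mul lam ?_)
  exact HasDerivAt.fun_sum fun i _ => hasDerivAt_arctan_abs_div_const_line δ (hsupp i)

theorem two_mul_residual_dotProduct_eq_of_isMinOn_atanObjective {x : Fin n → ℝ}
    (hmin : IsMinOn (atanObjective Ψ b lam δ) Set.univ x) {h : Fin n → ℝ}
    (hsupp : ∀ i, h i ≠ 0 → x i ≠ 0) :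
    2 * ∑ i, (b i - Ψ.mulVec x i) * Ψ.mulVec h i =
      lam * ∑ i ∈ univ.filter (fun i => x i ≠ 0), δ * h i * Real.sign (x i) / (δ ^ 2 + x i ^ 2) := by
  have hlocal : IsLocalMin (fun t : ℝ => atanObjective Ψ b lam δ (x + t • h)) 0 :=
    Filter.Eventually.of_forall fun t => by simpa using hmin (Set.mem_univ (x + t • h))
  have hcrit := hlocal.hasDerivAt_eq_zero (hasDerivAt_atanObjective_line Ψ b lam δ hsupp)
  have hfilter : ∑ i ∈ univ.filter (fun i => x i ≠ 0),
      δ * h i * Real.sign (x i) / (δ ^ 2 + x i ^ 2) =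
        ∑ i, δ * h i * Real.sign (x i) / (δ ^ 2 + x i ^ 2) :=
    sum_filter_of_ne fun i _ hne hxi => hne (by simp [hxi])
  have hneg : ∑ i, (b i - Ψ.mulVec x i) * Ψ.mulVec h i =
      -∑ i, (Ψ.mulVec x i - b i) * Ψ.mulVec h i := by
    rw [← sum_neg_distrib]
    exact sum_congr rfl fun i _ => by ring
  rw [hfilter, hneg]
  linarith

theorem two_mul_transpose_mulVec_residual_eq_of_isMinOn_atanObjective {x : Fin n → ℝ}
    (hmin : IsMinOn (atanObjective Ψ b lam δ) Set.univ x) {i : Fin n} (hi : x i ≠ 0) :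
    2 * Ψ.transpose.mulVec (fun k => b k - Ψ.mulVec x k) i =
      lam * δ * Real.sign (x i) / (δ ^ 2 + x i ^ 2) := by
  have hei := two_mul_residual_dotProduct_eq_of_isMinOn_atanObjective Ψ b lam δ hmin
    (h := Pi.single i 1) fun j hj => by
      rcases eq_or_ne j i with rfl | hji
      · exact hi
      · simp [hji] at hj
  have hlhs : ∑ k, (b k - Ψ.mulVec x k) * Ψ.mulVec (Pi.single i 1) k =
      Ψ.transpose.mulVec (fun k => b k - Ψ.mulVec x k) i := by
    change (fun k => b k - Ψ.mulVec x k) ⬝ᵥ Ψ.mulVec (Pi.single i 1) = _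
    rw [Matrix.dotProduct_mulVec, dotProduct_single_one, Matrix.mulVec_transpose]
  have hrhs : ∑ j ∈ univ.filter (fun j => x j ≠ 0),
      δ * Pi.single (M := fun _ => ℝ) i 1 j * Real.sign (x j) / (δ ^ 2 + x j ^ 2) =
        δ * Real.sign (x i) / (δ ^ 2 + x i ^ 2) := by
    rw [sum_eq_single_of_mem i (by simp [hi]) fun j _ hji => by simp [Pi.single_eq_of_ne hji]]
    simp
  rw [← hlhs, hei, hrhs]
  ring

end Objective

theorem stmt7_general {m n : ℕ} (Ψ : Matrix (Fin m) (Fin n) ℝ) (b : Fin m → ℝ)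
    (lam δ : ℝ) (xs : Fin n → ℝ)
    (hmin : ∀ x : Fin n → ℝ,
      (∑ i, (Ψ.mulVec xs i - b i) ^ 2) + lam * ∑ i, Real.arctan (|xs i| / δ) ≤
        (∑ i, (Ψ.mulVec x i - b i) ^ 2) + lam * ∑ i, Real.arctan (|x i| / δ)) :
    (∀ h : Fin n → ℝ, (∀ i, h i ≠ 0 → xs i ≠ 0) →
      2 * ∑ i, (b i - Ψ.mulVec xs i) * Ψ.mulVec h i =
        lam * ∑ i ∈ Finset.univ.filter (fun i => xs i ≠ 0),
          δ * h i * Real.sign (xs i) / (δ ^ 2 + xs i ^ 2)) ∧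
    (∀ i : Fin n, xs i ≠ 0 →
      2 * Ψ.transpose.mulVec (fun k => b k - Ψ.mulVec xs k) i =
        lam * δ * Real.sign (xs i) / (δ ^ 2 + xs i ^ 2)) := by
  have hmin' : IsMinOn (atanObjective Ψ b lam δ) Set.univ xs := fun x _ => hmin x
  exact ⟨fun _ => two_mul_residual_dotProduct_eq_of_isMinOn_atanObjective Ψ b lam δ hmin',
    fun _ => two_mul_transpose_mulVec_residual_eq_of_isMinOn_atanObjective Ψ b lam δ hmin'⟩

/-- First-order conditions at a global minimizer x* of
G_δ(x) = ‖Ψx − b‖₂² + λ‖x‖_{g_δ}: for every h with supp(h) ⊆ supp(x*),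
2⟨b − Ψx*, Ψh⟩ = λ ∑_{i ∈ supp(x*)} δ hᵢ sgn(x*ᵢ)/(δ² + (x*ᵢ)²); in particular
2(Ψᵀ(b − Ψx*))ᵢ = λ δ sgn(x*ᵢ)/(δ² + (x*ᵢ)²) for every i ∈ supp(x*). -/
theorem stmt7 {m n : ℕ} (Ψ : Matrix (Fin m) (Fin n) ℝ) (b : Fin m → ℝ)
    (lam δ : ℝ) (hlam : 0 < lam) (hδ : 0 < δ) (xs : Fin n → ℝ)
    (hmin : ∀ x : Fin n → ℝ,
      (∑ i, (Ψ.mulVec xs i - b i) ^ 2) + lam * ∑ i, Real.arctan (|xs i| / δ) ≤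
        (∑ i, (Ψ.mulVec x i - b i) ^ 2) + lam * ∑ i, Real.arctan (|x i| / δ)) :
    (∀ h : Fin n → ℝ, (∀ i, h i ≠ 0 → xs i ≠ 0) →
      2 * ∑ i, (b i - Ψ.mulVec xs i) * Ψ.mulVec h i =
        lam * ∑ i ∈ Finset.univ.filter (fun i => xs i ≠ 0),
          δ * h i * Real.sign (xs i) / (δ ^ 2 + xs i ^ 2)) ∧
    (∀ i : Fin n, xs i ≠ 0 →
      2 * Ψ.transpose.mulVec (fun k => b k - Ψ.mulVec xs k) i =
        lam * δ * Real.sign (xs i) / (δ ^ 2 + xs i ^ 2)) :=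
  stmt7_general Ψ b lam δ xs hmin
end

section
/- Let Ψ ∈ ℝ^{m×n}, b ∈ ℝ^m, δ > 0, and λ > 2‖b‖₂²/π. If x* is a global minimizer of G_δ(x) := ‖Ψx − b‖₂² + λ‖x‖_{g_δ} over ℝⁿ, then ‖x*‖_∞ ≤ δ·tan(‖b‖₂²/λ). -/
/-!
Comparing the minimizer with `x = 0`, whose objective value is `‖b‖₂²`, gives
`λ ∑ arctan (|x*ᵢ| / δ) ≤ ‖b‖₂²`. Every summand is nonnegative, so each one is at most
`‖b‖₂² / λ`, and the hypothesis on `λ` puts this bound below `π / 2`, where `tan` inverts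
`arctan` monotonically.
-/

open Finset

namespace Real

theorem le_tan_of_arctan_le {t y : ℝ} (h : arctan t ≤ y) (hy : y < π / 2) : t ≤ tan y := by
  have hy' : -(π / 2) < y := (neg_pi_div_two_lt_arctan t).trans_le h
  rwa [← arctan_tan hy' hy, arctan_le_arctan_iff] at h

theorem le_mul_tan_of_arctan_div_le {t y δ : ℝ} (hδ : 0 < δ) (h : arctan (t / δ) ≤ y)
    (hy : y < π / 2) : t ≤ δ * tan y := by
  rw [← div_le_iff₀' hδ]
  exact le_tan_of_arctan_le h hy

end Real

theorem arctan_le_sum_arctan_abs_div {ι : Type*} [Fintype ι] {δ : ℝ} (hδ : 0 ≤ δ)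
    (x : ι → ℝ) (i : ι) : Real.arctan (|x i| / δ) ≤ ∑ j, Real.arctan (|x j| / δ) :=
  single_le_sum (f := fun j => Real.arctan (|x j| / δ))
    (fun j _ => Real.arctan_nonneg.mpr (by positivity)) (mem_univ i)

theorem mul_sum_arctan_le_of_le_at_zero {κ ι : Type*} [Fintype κ] [Fintype ι]
    (Ψ : Matrix κ ι ℝ) (b : κ → ℝ) (lam δ : ℝ) (xs : ι → ℝ)
    (h : (∑ i, (Ψ.mulVec xs i - b i) ^ 2) + lam * ∑ i, Real.arctan (|xs i| / δ) ≤
        (∑ i, (Ψ.mulVec 0 i - b i) ^ 2) + lam * ∑ i, Real.arctan (|(0 : ι → ℝ) i| / δ)) :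
    lam * ∑ i, Real.arctan (|xs i| / δ) ≤ ∑ i, b i ^ 2 := by
  have hres : 0 ≤ ∑ i, (Ψ.mulVec xs i - b i) ^ 2 := sum_nonneg fun i _ => sq_nonneg _
  simp only [Matrix.mulVec_zero, Pi.zero_apply, zero_sub, neg_sq, abs_zero, zero_div,
    Real.arctan_zero, sum_const_zero, mul_zero, add_zero] at h
  linarith

/-- If λ > 2‖b‖₂²/π and x* globally minimizes
G_δ(x) = ‖Ψx − b‖₂² + λ‖x‖_{g_δ}, then ‖x*‖_∞ ≤ δ·tan(‖b‖₂²/λ). -/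
theorem stmt9 {m n : ℕ} (Ψ : Matrix (Fin m) (Fin n) ℝ) (b : Fin m → ℝ)
    (lam δ : ℝ) (hδ : 0 < δ) (hlam : 2 * (∑ i, b i ^ 2) / Real.pi < lam)
    (xs : Fin n → ℝ)
    (hmin : ∀ x : Fin n → ℝ,
      (∑ i, (Ψ.mulVec xs i - b i) ^ 2) + lam * ∑ i, Real.arctan (|xs i| / δ) ≤
        (∑ i, (Ψ.mulVec x i - b i) ^ 2) + lam * ∑ i, Real.arctan (|x i| / δ)) :
    ∀ i : Fin n, |xs i| ≤ δ * Real.tan ((∑ i, b i ^ 2) / lam) := by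
  intro i
  set B : ℝ := ∑ i, b i ^ 2
  have hB : 0 ≤ B := sum_nonneg fun i _ => sq_nonneg _
  have hlam0 : 0 < lam := lt_of_le_of_lt (by positivity) hlam
  have hpenalty := mul_sum_arctan_le_of_le_at_zero Ψ b lam δ xs (hmin 0)
  have harctan : Real.arctan (|xs i| / δ) ≤ B / lam := by
    rw [le_div_iff₀' hlam0]
    exact (mul_le_mul_of_nonneg_left (arctan_le_sum_arctan_abs_div hδ.le xs i) hlam0.le).trans
      hpenalty
  have hBlam : B / lam < Real.pi / 2 := by
    rw [div_lt_iff₀ Real.pi_pos] at hlam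
    rw [div_lt_div_iff₀ hlam0 two_pos]
    linarith
  exact Real.le_mul_tan_of_arctan_div_le hδ harctan hBlam
end

section
/- Let Ψ ∈ ℝ^{m×n}, b ∈ ℝ^m, λ > 0, δ > 0, and let x* be a global minimizer of G_δ(x) := ‖Ψx − b‖₂² + λ‖x‖_{g_δ} over ℝⁿ with x* ≠ 0. Then ‖Ψᵀ(Ψx* − b)‖₂² ≥ (λ²/4)·δ²/(δ² + ‖x*‖_∞²)². -/
/-!
Along the coordinate line through `x*` in a direction `j` with `|x*ⱼ| = ‖x*‖_∞ ≠ 0` the penalty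
is differentiable, so minimality gives the first-order condition
`2 (Ψᵀ(Ψx* − b))ⱼ + λ sign(x*ⱼ) δ / (δ² + x*ⱼ²) = 0`. Squaring it bounds this single entry of
`Ψᵀ(Ψx* − b)`, hence the whole sum of squares.
-/

open Finset Matrix Function Real

section

variable {ι κ : Type*} [Fintype ι] [Fintype κ] [DecidableEq κ]

theorem hasDerivAt_mulVec_update_sub (A : Matrix ι κ ℝ) (b : ι → ℝ) (x : κ → ℝ) (j : κ)
    (t : ℝ) : HasDerivAt (fun s => A *ᵥ update x j s - b) (A.col j) t := by
  have h := A.mulVecLin.toContinuousLinearMap.hasFDerivAt.comp_hasDerivAt t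
    (hasDerivAt_update x j t)
  simpa [mulVec_single_one] using h.sub_const b

theorem hasDerivAt_sum_sq_mulVec_update_sub (A : Matrix ι κ ℝ) (b : ι → ℝ) (x : κ → ℝ) (j : κ) :
    HasDerivAt (fun s => ∑ i, (A *ᵥ update x j s - b) i ^ 2)
      (2 * (Aᵀ *ᵥ (A *ᵥ x - b)) j) (x j) := by
  have h := hasDerivAt_pi.1 (hasDerivAt_mulVec_update_sub A b x j (x j))
  refine (HasDerivAt.fun_sum (u := univ) fun i _ => (h i).pow 2).congr_deriv ?_
  simp only [update_eq_self, mulVec, dotProduct, transpose_apply, col_apply, mul_sum]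
  exact sum_congr rfl fun i _ => by ring

theorem hasDerivAt_sum_comp_update {φ : ℝ → ℝ} {φ' : ℝ} (x : κ → ℝ) (j : κ)
    (hφ : HasDerivAt φ φ' (x j)) :
    HasDerivAt (fun s => ∑ l, φ (update x j s l)) φ' (x j) := by
  have : (fun s => ∑ l, φ (update x j s l)) = fun s => φ s + ∑ l ∈ univ \ {j}, φ (x l) := by
    ext s
    simp_rw [← comp_apply (f := φ), comp_update, sum_update_of_mem (mem_univ j)]
  rw [this]
  exact hφ.add_const _

theorem two_mul_transpose_mulVec_sub_add_mul_eq_zero_of_forall_le {A : Matrix ι κ ℝ}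
    {b : ι → ℝ} {lam φ' : ℝ} {φ : ℝ → ℝ} {x : κ → ℝ} {j : κ}
    (hmin : ∀ y, ∑ i, (A *ᵥ x - b) i ^ 2 + lam * ∑ l, φ (x l) ≤
      ∑ i, (A *ᵥ y - b) i ^ 2 + lam * ∑ l, φ (y l))
    (hφ : HasDerivAt φ φ' (x j)) :
    2 * (Aᵀ *ᵥ (A *ᵥ x - b)) j + lam * φ' = 0 := by
  have hloc : IsLocalMin (fun s => ∑ i, (A *ᵥ update x j s - b) i ^ 2 +
      lam * ∑ l, φ (update x j s l)) (x j) :=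
    Filter.Eventually.of_forall fun s => by simpa only [update_eq_self] using hmin (update x j s)
  exact hloc.hasDerivAt_eq_zero <| (hasDerivAt_sum_sq_mulVec_update_sub A b x j).add
    ((hasDerivAt_sum_comp_update x j hφ).const_mul lam)

end

theorem hasDerivAt_arctan_abs_div {δ t : ℝ} (hδ : δ ≠ 0) (ht : t ≠ 0) :
    HasDerivAt (fun s => arctan (|s| / δ)) (SignType.sign t * (δ / (δ ^ 2 + t ^ 2))) t := by
  refine ((hasDerivAt_abs ht).div_const δ).arctan.congr_deriv ?_
  field_simp
  rw [sq_abs, mul_comm]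

theorem sign_sq_of_ne_zero {t : ℝ} (ht : t ≠ 0) : (SignType.sign t : ℝ) ^ 2 = 1 := by
  rcases ht.lt_or_gt with h | h <;> simp [h]

theorem exists_ne_zero_abs_eq_iSup_abs {κ : Type*} [Finite κ] {x : κ → ℝ} (hx : x ≠ 0) :
    ∃ j, x j ≠ 0 ∧ |x j| = ⨆ i, |x i| := by
  obtain ⟨k, hk⟩ := Function.ne_iff.1 hx
  have : Nonempty κ := ⟨k⟩
  obtain ⟨j, hj⟩ := exists_eq_ciSup_of_finite (f := fun i => |x i|)
  refine ⟨j, fun h0 => hk ?_, hj⟩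
  have hkj : |x k| ≤ |x j| := hj ▸ le_ciSup (f := fun i => |x i|) (Set.finite_range _).bddAbove k
  simpa [h0] using hkj

theorem stmt10_general {m n : ℕ} (Ψ : Matrix (Fin m) (Fin n) ℝ) (b : Fin m → ℝ)
    (lam δ : ℝ) (hδ : 0 < δ) (xs : Fin n → ℝ) (hxs : xs ≠ 0)
    (hmin : ∀ x : Fin n → ℝ,
      (∑ i, (Ψ.mulVec xs i - b i) ^ 2) + lam * ∑ i, Real.arctan (|xs i| / δ) ≤
        (∑ i, (Ψ.mulVec x i - b i) ^ 2) + lam * ∑ i, Real.arctan (|x i| / δ)) :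
    ∑ j, (Ψ.transpose.mulVec (fun i => Ψ.mulVec xs i - b i)) j ^ 2 ≥
      lam ^ 2 / 4 * (δ ^ 2 / (δ ^ 2 + (⨆ i, |xs i|) ^ 2) ^ 2) := by
  obtain ⟨j, hj0, hjmax⟩ := exists_ne_zero_abs_eq_iSup_abs hxs
  have hstat := two_mul_transpose_mulVec_sub_add_mul_eq_zero_of_forall_le hmin
    (hasDerivAt_arctan_abs_div hδ.ne' hj0)
  have hgrad : (Ψᵀ *ᵥ (Ψ *ᵥ xs - b)) j =
      -(lam * (SignType.sign (xs j) * (δ / (δ ^ 2 + xs j ^ 2)))) / 2 := by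
    linear_combination hstat / 2
  calc lam ^ 2 / 4 * (δ ^ 2 / (δ ^ 2 + (⨆ i, |xs i|) ^ 2) ^ 2)
      = (Ψᵀ *ᵥ (Ψ *ᵥ xs - b)) j ^ 2 := by
        rw [hgrad, ← hjmax, sq_abs, ← div_pow]
        linear_combination (-(lam ^ 2 / 4) * (δ / (δ ^ 2 + xs j ^ 2)) ^ 2) *
          sign_sq_of_ne_zero hj0
    _ ≤ ∑ j, (Ψᵀ *ᵥ (Ψ *ᵥ xs - b)) j ^ 2 :=
        single_le_sum (fun i _ => sq_nonneg _) (mem_univ j)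

/-- If x* ≠ 0 globally minimizes G_δ(x) = ‖Ψx − b‖₂² + λ‖x‖_{g_δ}, then
‖Ψᵀ(Ψx* − b)‖₂² ≥ (λ²/4)·δ²/(δ² + ‖x*‖_∞²)², where ‖x*‖_∞ = ⨆ i, |x*ᵢ|. -/
theorem stmt10 {m n : ℕ} (Ψ : Matrix (Fin m) (Fin n) ℝ) (b : Fin m → ℝ)
    (lam δ : ℝ) (hlam : 0 < lam) (hδ : 0 < δ) (xs : Fin n → ℝ) (hxs : xs ≠ 0)
    (hmin : ∀ x : Fin n → ℝ,
      (∑ i, (Ψ.mulVec xs i - b i) ^ 2) + lam * ∑ i, Real.arctan (|xs i| / δ) ≤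
        (∑ i, (Ψ.mulVec x i - b i) ^ 2) + lam * ∑ i, Real.arctan (|x i| / δ)) :
    ∑ j, (Ψ.transpose.mulVec (fun i => Ψ.mulVec xs i - b i)) j ^ 2 ≥
      lam ^ 2 / 4 * (δ ^ 2 / (δ ^ 2 + (⨆ i, |xs i|) ^ 2) ^ 2) :=
  stmt10_general Ψ b lam δ hδ xs hxs hmin
end

section
/- Let δ > 0 and ρ₀ ∈ ℝ with ρ₀ ≠ 0, and set β := δ/(|ρ₀|·(δ² + ρ₀²)). Then for every ρ ∈ ℝ, (β/2)·ρ² − arctan(|ρ|/δ) ≥ (β/2)·ρ₀² − arctan(|ρ₀|/δ); i.e., the quadratic ρ ↦ (β/2)ρ² majorizes ρ ↦ arctan(|ρ|/δ) up to an additive constant, with equality at ρ = ±ρ₀. -/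
/-!
On `[0, ∞)` the map `r ↦ arctan (r / δ)` is concave, so it lies below its tangent line at
`r₀ = |ρ₀|`, whose slope is `δ / (δ² + r₀²) = β r₀`. The parabola `r ↦ (β/2) r²` has the same
slope at `r₀` and lies above that tangent line, so the difference of the two is minimal at `r₀`.
-/

open Set

lemma ConcaveOn.le_add_mul_sub_of_hasDerivAt {S : Set ℝ} {f : ℝ → ℝ} {f' x y : ℝ}
    (hfc : ConcaveOn ℝ S f) (hx : x ∈ S) (hy : y ∈ S) (hf' : HasDerivAt f f' x) :
    f y ≤ f x + f' * (y - x) := by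
  rcases lt_trichotomy x y with hxy | rfl | hyx
  · have hslope := hfc.slope_le_of_hasDerivAt hx hy hxy hf'
    rw [slope_def_field, div_le_iff₀ (sub_pos.mpr hxy)] at hslope
    linarith
  · simp
  · have hslope := hfc.le_slope_of_hasDerivAt hy hx hyx hf'
    rw [slope_def_field, le_div_iff₀ (sub_pos.mpr hyx)] at hslope
    linarith

namespace Real

lemma concaveOn_arctan_Ici : ConcaveOn ℝ (Ici 0) arctan := by
  refine AntitoneOn.concaveOn_of_deriv (convex_Ici 0) continuous_arctan.continuousOn
    differentiable_arctan.differentiableOn ?_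
  rw [interior_Ici, deriv_arctan]
  intro a ha b _ hab
  dsimp only
  have ha₀ : 0 ≤ a := le_of_lt ha
  gcongr

lemma arctan_le_arctan_add_div_of_nonneg {a b : ℝ} (ha : 0 ≤ a) (hb : 0 ≤ b) :
    arctan b ≤ arctan a + (b - a) / (1 + a ^ 2) := by
  have h := concaveOn_arctan_Ici.le_add_mul_sub_of_hasDerivAt ha hb (hasDerivAt_arctan a)
  rwa [one_div_mul_eq_div] at h

end Real

/-- For δ > 0, ρ₀ ≠ 0 and β = δ/(|ρ₀|(δ² + ρ₀²)), the quadratic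
ρ ↦ (β/2)ρ² majorizes ρ ↦ arctan(|ρ|/δ) up to an additive constant, with equality at
ρ = ±ρ₀. -/
theorem stmt13 (δ ρ₀ β : ℝ) (hδ : 0 < δ) (hρ₀ : ρ₀ ≠ 0)
    (hβ : β = δ / (|ρ₀| * (δ ^ 2 + ρ₀ ^ 2))) :
    (∀ ρ : ℝ,
      β / 2 * ρ ^ 2 - Real.arctan (|ρ| / δ) ≥
        β / 2 * ρ₀ ^ 2 - Real.arctan (|ρ₀| / δ)) ∧
    β / 2 * ρ₀ ^ 2 - Real.arctan (|ρ₀| / δ) =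
      β / 2 * (-ρ₀) ^ 2 - Real.arctan (|(-ρ₀)| / δ) := by
  refine ⟨fun ρ => ?_, by rw [abs_neg, neg_sq]⟩
  rw [← sq_abs ρ, ← sq_abs ρ₀] at *
  set r := |ρ|
  set r₀ := |ρ₀|
  have hr₀ : 0 < r₀ := abs_pos.mpr hρ₀
  have hβ_nonneg : 0 ≤ β := by rw [hβ]; positivity
  have htangent := Real.arctan_le_arctan_add_div_of_nonneg
    (div_nonneg hr₀.le hδ.le) (div_nonneg (abs_nonneg ρ) hδ.le)
  have hslope : (r / δ - r₀ / δ) / (1 + (r₀ / δ) ^ 2) = β * r₀ * (r - r₀) := by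
    rw [hβ]
    field_simp
  nlinarith [mul_nonneg hβ_nonneg (sq_nonneg (r - r₀))]
end
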